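/- Define V : ℝⁿ × ℝⁿ × ℝⁿ → ℝ by 2V(X,Y,Z) = (1/4)⟨BX, BX⟩ + (3/2)⟨BY, Y⟩ + ⟨Z, Z⟩ + ⟨Z + AY + (1/2)BX, Z + AY + (1/2)BX⟩, where A and B are real symmetric n×n matrices whose eigenvalues lie in [δ_a, Δ_a] and [δ_b, Δ_b] respectively, with 0 < δ_a and 0 < δ_b. Then there exist positive constants δ₂ and δ₃ such that δ₂(‖X‖² + ‖Y‖² + ‖Z‖²) ≤ 2V(X,Y,Z) ≤ δ₃(‖X‖² + ‖Y‖² + ‖Z‖²) for all X, Y, Z ∈ ℝⁿ. -/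

import Mathlib

open scoped RealInnerProductSpace

/-!
Dropping the last square, `2V ≥ ¼‖BX‖² + (3/2)⟪BY, Y⟫ + ‖Z‖²`. Since the spectrum of `B` lies above
`δ_b`, `B - δ_b` is positive semidefinite, so `⟪Bx, x⟫ ≥ δ_b‖x‖²`, and then Cauchy–Schwarz gives
`‖Bx‖ ≥ δ_b‖x‖`. The upper bound only needs the operator norms of `A` and `B` together with
`‖u + v + w‖² ≤ 3(‖u‖² + ‖v‖² + ‖w‖²)`.
-/

lemma norm_add₃_sq_le {E : Type*} [SeminormedAddCommGroup E] (a b c : E) :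
    ‖a + b + c‖ ^ 2 ≤ 3 * (‖a‖ ^ 2 + ‖b‖ ^ 2 + ‖c‖ ^ 2) := by
  have h := norm_add₃_le (a := a) (b := b) (c := c)
  have h0 := norm_nonneg (a + b + c)
  nlinarith [sq_nonneg (‖a‖ - ‖b‖), sq_nonneg (‖b‖ - ‖c‖), sq_nonneg (‖a‖ - ‖c‖)]

lemma min_min_mul_add_add_le {a b c x y z : ℝ} (hx : 0 ≤ x) (hy : 0 ≤ y) (hz : 0 ≤ z) :
    min a (min b c) * (x + y + z) ≤ a * x + b * y + c * z := by
  have ha := mul_le_mul_of_nonneg_right (min_le_left a (min b c)) hx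
  have hb := mul_le_mul_of_nonneg_right ((min_le_right a _).trans (min_le_left b c)) hy
  have hc := mul_le_mul_of_nonneg_right ((min_le_right a _).trans (min_le_right b c)) hz
  linarith

lemma mul_norm_le_norm_of_mul_norm_sq_le_inner {E : Type*} [NormedAddCommGroup E]
    [InnerProductSpace ℝ E] {a : ℝ} {x y : E} (h : a * ‖x‖ ^ 2 ≤ ⟪y, x⟫) :
    a * ‖x‖ ≤ ‖y‖ := by
  rcases (norm_nonneg x).eq_or_lt with hx | hx
  · rw [← hx, mul_zero]; exact norm_nonneg y
  · refine le_of_mul_le_mul_right ?_ hx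
    calc a * ‖x‖ * ‖x‖ = a * ‖x‖ ^ 2 := by ring
      _ ≤ ⟪y, x⟫ := h
      _ ≤ ‖y‖ * ‖x‖ := real_inner_le_norm y x

lemma Matrix.IsHermitian.mul_norm_sq_le_inner_toEuclideanLin {ι : Type*} [Fintype ι]
    [DecidableEq ι] {A : Matrix ι ι ℝ} (hA : A.IsHermitian) {a : ℝ}
    (ha : ∀ μ ∈ spectrum ℝ A, a ≤ μ) (x : EuclideanSpace ℝ ι) :
    a * ‖x‖ ^ 2 ≤ ⟪Matrix.toEuclideanLin A x, x⟫ := by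
  have hpos : (A - algebraMap ℝ _ a).PosSemidef := by
    refine Matrix.posSemidef_iff_isHermitian_and_spectrum_nonneg.2
      ⟨hA.sub (Matrix.isHermitian_diagonal _), ?_⟩
    rw [← spectrum.sub_singleton_eq]
    rintro _ ⟨μ, hμ, _, rfl, rfl⟩
    simpa using ha μ hμ
  have := (Matrix.isPositive_toEuclideanLin_iff.2 hpos).inner_nonneg_left x
  simp only [Algebra.algebraMap_eq_smul_one, map_sub, map_smul, Matrix.toLpLin_one,
    LinearMap.sub_apply, LinearMap.smul_apply, LinearMap.id_coe, id_eq, inner_sub_left,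
    real_inner_smul_left, real_inner_self_eq_norm_sq, sub_nonneg] at this
  exact this

section Lyapunov

variable {E : Type*} [NormedAddCommGroup E] [InnerProductSpace ℝ E]

/-- The quadratic form `2V(X, Y, Z)` of the paper. -/
noncomputable def lyapunov (A B : E →L[ℝ] E) (X Y Z : E) : ℝ :=
  (1/4) * ⟪B X, B X⟫ + (3/2) * ⟪B Y, Y⟫ + ⟪Z, Z⟫ +
    ⟪Z + A Y + (1/2 : ℝ) • B X, Z + A Y + (1/2 : ℝ) • B X⟫

lemma le_lyapunov (A : E →L[ℝ] E) {B : E →L[ℝ] E} {δ : ℝ} (hδ : 0 ≤ δ)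
    (hB : ∀ x, δ * ‖x‖ ^ 2 ≤ ⟪B x, x⟫) (X Y Z : E) :
    min (δ ^ 2 / 4) (min (3/2 * δ) 1) * (‖X‖ ^ 2 + ‖Y‖ ^ 2 + ‖Z‖ ^ 2) ≤ lyapunov A B X Y Z := by
  have hBX : δ ^ 2 * ‖X‖ ^ 2 ≤ ‖B X‖ ^ 2 := by
    rw [← mul_pow]
    exact pow_le_pow_left₀ (by positivity) (mul_norm_le_norm_of_mul_norm_sq_le_inner (hB X)) 2
  have hW := real_inner_self_nonneg (x := Z + A Y + (1/2 : ℝ) • B X)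
  calc _ ≤ δ ^ 2 / 4 * ‖X‖ ^ 2 + 3/2 * δ * ‖Y‖ ^ 2 + 1 * ‖Z‖ ^ 2 :=
        min_min_mul_add_add_le (by positivity) (by positivity) (by positivity)
    _ ≤ lyapunov A B X Y Z := by
        unfold lyapunov
        rw [real_inner_self_eq_norm_sq, real_inner_self_eq_norm_sq]
        linarith [hB Y]

lemma lyapunov_le (A B : E →L[ℝ] E) (X Y Z : E) :
    lyapunov A B X Y Z ≤
      (‖B‖ ^ 2 + 3/2 * ‖B‖ + 3 * ‖A‖ ^ 2 + 4) * (‖X‖ ^ 2 + ‖Y‖ ^ 2 + ‖Z‖ ^ 2) := by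
  have hBX : ‖B X‖ ^ 2 ≤ ‖B‖ ^ 2 * ‖X‖ ^ 2 := by
    rw [← mul_pow]; exact pow_le_pow_left₀ (norm_nonneg _) (B.le_opNorm X) 2
  have hAY : ‖A Y‖ ^ 2 ≤ ‖A‖ ^ 2 * ‖Y‖ ^ 2 := by
    rw [← mul_pow]; exact pow_le_pow_left₀ (norm_nonneg _) (A.le_opNorm Y) 2
  have hBY : ⟪B Y, Y⟫ ≤ ‖B‖ * ‖Y‖ ^ 2 :=
    calc ⟪B Y, Y⟫ ≤ ‖B Y‖ * ‖Y‖ := real_inner_le_norm _ _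
      _ ≤ ‖B‖ * ‖Y‖ * ‖Y‖ := by gcongr; exact B.le_opNorm Y
      _ = ‖B‖ * ‖Y‖ ^ 2 := by ring
  have hW := norm_add₃_sq_le Z (A Y) ((1/2 : ℝ) • B X)
  rw [norm_smul, mul_pow] at hW
  norm_num at hW
  unfold lyapunov
  simp only [real_inner_self_eq_norm_sq]
  have hB0 : 0 ≤ ‖B‖ := norm_nonneg B
  have hX : 0 ≤ (3/2 * ‖B‖ + 3 * ‖A‖ ^ 2 + 4) * ‖X‖ ^ 2 := by positivity
  have hY : 0 ≤ (‖B‖ ^ 2 + 4) * ‖Y‖ ^ 2 := by positivity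
  have hZ : 0 ≤ (‖B‖ ^ 2 + 3/2 * ‖B‖ + 3 * ‖A‖ ^ 2) * ‖Z‖ ^ 2 := by positivity
  linarith

end Lyapunov

theorem stmt_7_general (n : ℕ) (A B : Matrix (Fin n) (Fin n) ℝ)
    (hB : B.IsHermitian)
    (δ_b Δ_b : ℝ) (hδb : 0 < δ_b)
    (hBspec : ∀ μ ∈ spectrum ℝ B, δ_b ≤ μ ∧ μ ≤ Δ_b) :
    ∃ δ₂ δ₃ : ℝ, 0 < δ₂ ∧ 0 < δ₃ ∧
      ∀ X Y Z : EuclideanSpace ℝ (Fin n),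
        δ₂ * (‖X‖ ^ 2 + ‖Y‖ ^ 2 + ‖Z‖ ^ 2) ≤
            (1/4) * ⟪Matrix.toEuclideanLin B X, Matrix.toEuclideanLin B X⟫ +
              (3/2) * ⟪Matrix.toEuclideanLin B Y, Y⟫ + ⟪Z, Z⟫ +
              ⟪Z + Matrix.toEuclideanLin A Y + (1/2 : ℝ) • Matrix.toEuclideanLin B X,
                Z + Matrix.toEuclideanLin A Y + (1/2 : ℝ) • Matrix.toEuclideanLin B X⟫ ∧
          (1/4) * ⟪Matrix.toEuclideanLin B X, Matrix.toEuclideanLin B X⟫ +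
              (3/2) * ⟪Matrix.toEuclideanLin B Y, Y⟫ + ⟪Z, Z⟫ +
              ⟪Z + Matrix.toEuclideanLin A Y + (1/2 : ℝ) • Matrix.toEuclideanLin B X,
                Z + Matrix.toEuclideanLin A Y + (1/2 : ℝ) • Matrix.toEuclideanLin B X⟫ ≤
            δ₃ * (‖X‖ ^ 2 + ‖Y‖ ^ 2 + ‖Z‖ ^ 2) := by
  let A' := LinearMap.toContinuousLinearMap (Matrix.toEuclideanLin A)
  let B' := LinearMap.toContinuousLinearMap (Matrix.toEuclideanLin B)
  have hB' : ∀ x, δ_b * ‖x‖ ^ 2 ≤ ⟪B' x, x⟫ :=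
    hB.mul_norm_sq_le_inner_toEuclideanLin fun μ hμ => (hBspec μ hμ).1
  exact ⟨_, _, by positivity, by positivity,
    fun X Y Z => ⟨le_lyapunov A' hδb.le hB' X Y Z, lyapunov_le A' B' X Y Z⟩⟩

theorem stmt_7 (n : ℕ) (A B : Matrix (Fin n) (Fin n) ℝ)
    (hA : A.IsHermitian) (hB : B.IsHermitian)
    (δ_a Δ_a δ_b Δ_b : ℝ) (hδa : 0 < δ_a) (hδb : 0 < δ_b)
    (hAspec : ∀ μ ∈ spectrum ℝ A, δ_a ≤ μ ∧ μ ≤ Δ_a)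
    (hBspec : ∀ μ ∈ spectrum ℝ B, δ_b ≤ μ ∧ μ ≤ Δ_b) :
    ∃ δ₂ δ₃ : ℝ, 0 < δ₂ ∧ 0 < δ₃ ∧
      ∀ X Y Z : EuclideanSpace ℝ (Fin n),
        δ₂ * (‖X‖ ^ 2 + ‖Y‖ ^ 2 + ‖Z‖ ^ 2) ≤
            (1/4) * ⟪Matrix.toEuclideanLin B X, Matrix.toEuclideanLin B X⟫ +
              (3/2) * ⟪Matrix.toEuclideanLin B Y, Y⟫ + ⟪Z, Z⟫ +
              ⟪Z + Matrix.toEuclideanLin A Y + (1/2 : ℝ) • Matrix.toEuclideanLin B X,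
                Z + Matrix.toEuclideanLin A Y + (1/2 : ℝ) • Matrix.toEuclideanLin B X⟫ ∧
          (1/4) * ⟪Matrix.toEuclideanLin B X, Matrix.toEuclideanLin B X⟫ +
              (3/2) * ⟪Matrix.toEuclideanLin B Y, Y⟫ + ⟪Z, Z⟫ +
              ⟪Z + Matrix.toEuclideanLin A Y + (1/2 : ℝ) • Matrix.toEuclideanLin B X,
                Z + Matrix.toEuclideanLin A Y + (1/2 : ℝ) • Matrix.toEuclideanLin B X⟫ ≤
            δ₃ * (‖X‖ ^ 2 + ‖Y‖ ^ 2 + ‖Z‖ ^ 2) :=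
  stmt_7_general n A B hB δ_b Δ_b hδb hBspec
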